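/- Let K ≥ 1, n : Fin K → ℕ with all n i ≥ 1, and let ρ₁, ρ₂ be Hermitian positive-semidefinite matrices indexed by (Π i : Fin K, Fin (n i))² over ℂ. If ρ₁ and ρ₂ are SLOCC equivalent, then there exist unitary matrices X, Y indexed by (Π i, Fin (n i))² and an invertible diagonal matrix B with positive real diagonal entries such that ρ₁ = X B Y† ρ₂ Y B X†, and for every i₀ : Fin K the realignment of the matrix XBY† with respect to the bipartition {i₀} versus the remaining parties has rank 1. -/

import Mathlib

/-!
The SLOCC operator `T = ⊗ᵢ aᵢ` is invertible, so it has a singular value decomposition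
`T = X B Y†` with `X, Y` unitary and `B` positive diagonal; substituting it into `ρ₁ = T ρ₂ T†`
gives the required identity. Realigning a Kronecker product with respect to `{i₀}` turns it into
the outer product of the entry vector of `a_{i₀}` with that of `⊗_{j ≠ i₀} aⱼ`; both factors are
invertible, hence nonzero, so the realignment has rank one.
-/

open Matrix ComplexOrder

/-- Extend a local index `a` at position `i₀` and indices `f` on the remaining
positions to a full multi-index. -/
def extendIdx {ι : Type*} [DecidableEq ι] {m : ι → ℕ} (i₀ : ι) (a : Fin (m i₀))
    (f : ∀ j : {j : ι // j ≠ i₀}, Fin (m j)) : ∀ i, Fin (m i) :=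
  fun i => if h : i = i₀ then cast (congrArg (fun k => Fin (m k)) h).symm a else f ⟨i, h⟩

/-- The realignment of a matrix `A` indexed by multi-indices, with respect to the
bipartition `{i₀}` versus the remaining parties. -/
def realignAt {ι : Type*} [DecidableEq ι] {m : ι → ℕ}
    (A : Matrix (∀ i, Fin (m i)) (∀ i, Fin (m i)) ℂ) (i₀ : ι) :
    Matrix (Fin (m i₀) × Fin (m i₀))
      ((∀ j : {j : ι // j ≠ i₀}, Fin (m j)) × (∀ j : {j : ι // j ≠ i₀}, Fin (m j))) ℂ :=
  Matrix.of fun p q => A (extendIdx i₀ p.1 q.1) (extendIdx i₀ p.2 q.2)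

namespace Matrix

section Rank

variable {m n K : Type*} [Fintype n] [DecidableEq n] [Field K]

theorem rank_pos_of_ne_zero {A : Matrix m n K} (hA : A ≠ 0) : 0 < A.rank := by
  rwa [Nat.pos_iff_ne_zero, Ne, rank, Submodule.finrank_eq_zero, LinearMap.range_eq_bot,
    ← toLin'_apply', LinearEquiv.map_eq_zero_iff]

theorem rank_vecMulVec_eq_one {w : m → K} {v : n → K} (hw : w ≠ 0) (hv : v ≠ 0) :
    (vecMulVec w v).rank = 1 := by
  refine le_antisymm (rank_vecMulVec_le w v) (rank_pos_of_ne_zero fun h => ?_)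
  obtain ⟨p, hp⟩ := Function.ne_iff.mp hw
  obtain ⟨q, hq⟩ := Function.ne_iff.mp hv
  exact mul_ne_zero hp hq (congrFun (congrFun h p) q)

end Rank

section SVD

variable {N 𝕜 : Type*} [Fintype N] [DecidableEq N] [RCLike 𝕜]

theorem exists_svd_of_isUnit {T : Matrix N N 𝕜} (hT : IsUnit T) :
    ∃ (X Y : Matrix N N 𝕜) (b : N → ℝ), X ∈ unitaryGroup N 𝕜 ∧ Y ∈ unitaryGroup N 𝕜 ∧
      (∀ x, 0 < b x) ∧ T = X * diagonal (fun x => (b x : 𝕜)) * Yᴴ := by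
  have hH : (Tᴴ * T).PosDef := .conjTranspose_mul_self T (mulVec_injective_of_isUnit hT)
  set U : Matrix N N 𝕜 := ↑hH.isHermitian.eigenvectorUnitary
  have hU : U ∈ unitaryGroup N 𝕜 := hH.isHermitian.eigenvectorUnitary.2
  set b : N → ℝ := fun x => √(hH.isHermitian.eigenvalues x)
  have hb : ∀ x, 0 < b x := fun x => Real.sqrt_pos.2 (hH.eigenvalues_pos x)
  set B := diagonal (fun x => (b x : 𝕜))
  set B' := diagonal (fun x => (b x : 𝕜)⁻¹)
  have hB'B : B' * B = 1 := by simp [B, B', diagonal_mul_diagonal, fun x => (hb x).ne']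
  have hBB' : B * B' = 1 := by simp [B, B', diagonal_mul_diagonal, fun x => (hb x).ne']
  have hB' : star B' = B' := by simp [B', star_eq_conjTranspose, diagonal_conjTranspose]
  have hdiag : star U * (Tᴴ * T) * U = B * B := by
    have := hH.isHermitian.conjStarAlgAut_star_eigenvectorUnitary
    simp only [Unitary.conjStarAlgAut_apply, Unitary.coe_star, star_star] at this
    rw [this, diagonal_mul_diagonal]
    congr 1; ext x
    simp [b, ← RCLike.ofReal_mul, Real.mul_self_sqrt (hH.eigenvalues_pos x).le]
  -- `TᴴT = U B² Uᴴ` makes `T U B⁻¹` unitary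
  refine ⟨T * U * B', U, b, ?_, hU, hb, ?_⟩
  · rw [mem_unitaryGroup_iff']
    calc star (T * U * B') * (T * U * B') = B' * (star U * (Tᴴ * T) * U) * B' := by
          simp only [star_mul, hB', star_eq_conjTranspose, Matrix.mul_assoc]
      _ = 1 := by
          rw [hdiag]
          simp only [Matrix.mul_assoc]
          rw [hBB', Matrix.mul_one, hB'B]
  · rw [Matrix.mul_assoc (T * U), hB'B, Matrix.mul_one, Matrix.mul_assoc,
      ← star_eq_conjTranspose, Unitary.mul_star_self_of_mem hU, Matrix.mul_one]

end SVD

section PiKronecker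

variable {ι R : Type*} [Fintype ι] [CommSemiring R] {κ μ ν : ι → Type*}

def piKronecker (a : ∀ i, Matrix (κ i) (μ i) R) : Matrix (∀ i, κ i) (∀ i, μ i) R :=
  of fun x y => ∏ i, a i (x i) (y i)

theorem piKronecker_mul [DecidableEq ι] [∀ i, Fintype (μ i)] (a : ∀ i, Matrix (κ i) (μ i) R)
    (b : ∀ i, Matrix (μ i) (ν i) R) :
    piKronecker a * piKronecker b = piKronecker fun i => a i * b i := by
  ext x y
  simp only [piKronecker, mul_apply, of_apply, ← Finset.prod_mul_distrib]
  exact (Fintype.prod_sum fun i z => a i (x i) z * b i z (y i)).symm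

theorem piKronecker_one [∀ i, DecidableEq (κ i)] :
    piKronecker (fun i => (1 : Matrix (κ i) (κ i) R)) = 1 := by
  ext x y
  simp [piKronecker, one_apply, Finset.prod_boole, funext_iff]

theorem isUnit_piKronecker [DecidableEq ι] [∀ i, Fintype (κ i)] [∀ i, DecidableEq (κ i)]
    {a : ∀ i, Matrix (κ i) (κ i) R} (ha : ∀ i, IsUnit (a i)) : IsUnit (piKronecker a) := by
  choose b hab hba using fun i => isUnit_iff_exists.1 (ha i)
  exact isUnit_iff_exists.2 ⟨piKronecker b, by simp [piKronecker_mul, hab, piKronecker_one],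
    by simp [piKronecker_mul, hba, piKronecker_one]⟩

end PiKronecker

end Matrix

section Realign

variable {ι : Type*} [DecidableEq ι] {m : ι → ℕ}

@[simp] theorem extendIdx_self (i₀ : ι) (a : Fin (m i₀)) (f : ∀ j : {j : ι // j ≠ i₀}, Fin (m j)) :
    extendIdx i₀ a f i₀ = a := by
  simp [extendIdx]

@[simp] theorem extendIdx_of_ne (i₀ : ι) (a : Fin (m i₀)) (f : ∀ j : {j : ι // j ≠ i₀}, Fin (m j))
    (j : {j : ι // j ≠ i₀}) : extendIdx i₀ a f j = f j := by
  simp [extendIdx, j.2]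

theorem realignAt_piKronecker [Fintype ι]
    (a : ∀ i, Matrix (Fin (m i)) (Fin (m i)) ℂ) (i₀ : ι) :
    realignAt (piKronecker a) i₀ = vecMulVec (fun p => a i₀ p.1 p.2)
      (fun q => piKronecker (fun j : {j // j ≠ i₀} => a j) q.1 q.2) := by
  ext p q
  simp only [realignAt, piKronecker, of_apply, vecMulVec_apply,
    Fintype.prod_eq_mul_prod_subtype_ne _ i₀, extendIdx_self, extendIdx_of_ne]

end Realign

theorem slocc_mixed_necessary_general (K : ℕ) (n : Fin K → ℕ)
    (hn : ∀ i, 1 ≤ n i)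
    (ρ₁ ρ₂ : Matrix (∀ i, Fin (n i)) (∀ i, Fin (n i)) ℂ)
    (hslocc : ∃ a : ∀ i, Matrix (Fin (n i)) (Fin (n i)) ℂ,
      (∀ i, IsUnit (a i)) ∧
        ρ₁ = (Matrix.of fun x y => ∏ i, a i (x i) (y i)) * ρ₂ *
          (Matrix.of fun x y => ∏ i, a i (x i) (y i))ᴴ) :
    ∃ (X Y : Matrix (∀ i, Fin (n i)) (∀ i, Fin (n i)) ℂ)
      (b : (∀ i, Fin (n i)) → ℝ),
      X ∈ Matrix.unitaryGroup (∀ i, Fin (n i)) ℂ ∧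
      Y ∈ Matrix.unitaryGroup (∀ i, Fin (n i)) ℂ ∧
      (∀ x, 0 < b x) ∧
      ρ₁ = X * Matrix.diagonal (fun x => (b x : ℂ)) * Yᴴ * ρ₂ *
        Y * Matrix.diagonal (fun x => (b x : ℂ)) * Xᴴ ∧
      ∀ i₀ : Fin K,
        (realignAt (X * Matrix.diagonal (fun x => (b x : ℂ)) * Yᴴ) i₀).rank = 1 := by
  obtain ⟨a, ha, hρ⟩ := hslocc
  change ρ₁ = piKronecker a * ρ₂ * (piKronecker a)ᴴ at hρ
  have : ∀ i, Nonempty (Fin (n i)) := fun i => ⟨⟨0, hn i⟩⟩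
  obtain ⟨X, Y, b, hX, hY, hb, hT⟩ := exists_svd_of_isUnit (isUnit_piKronecker ha)
  -- the `RCLike` coercion `ℝ → ℂ` is `algebraMap`, not syntactically `Complex.ofReal`
  simp only [Complex.coe_algebraMap] at hT
  refine ⟨X, Y, b, hX, hY, hb, ?_, fun i₀ => ?_⟩
  · simp only [hρ, hT, conjTranspose_mul, conjTranspose_conjTranspose, diagonal_conjTranspose,
      Pi.star_def, RCLike.star_def, Complex.conj_ofReal, Matrix.mul_assoc]
  · rw [← hT, realignAt_piKronecker]
    have hrest := isUnit_piKronecker (a := fun j : {j // j ≠ i₀} => a j) fun j => ha j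
    exact rank_vecMulVec_eq_one (fun h => (ha i₀).ne_zero (ext fun r s => congrFun h (r, s)))
      fun h => hrest.ne_zero (ext fun f g => congrFun h (f, g))

/-- If two multipartite mixed states are SLOCC equivalent, then there exist
unitaries `X, Y` and an invertible diagonal `B` with positive real entries such
that `ρ₁ = XBY† ρ₂ YBX†` and every single-party realignment of `XBY†` has
rank 1. -/
theorem slocc_mixed_necessary (K : ℕ) (hK : 1 ≤ K) (n : Fin K → ℕ)
    (hn : ∀ i, 1 ≤ n i)
    (ρ₁ ρ₂ : Matrix (∀ i, Fin (n i)) (∀ i, Fin (n i)) ℂ)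
    (hρ₁ : ρ₁.PosSemidef) (hρ₂ : ρ₂.PosSemidef)
    (hslocc : ∃ a : ∀ i, Matrix (Fin (n i)) (Fin (n i)) ℂ,
      (∀ i, IsUnit (a i)) ∧
        ρ₁ = (Matrix.of fun x y => ∏ i, a i (x i) (y i)) * ρ₂ *
          (Matrix.of fun x y => ∏ i, a i (x i) (y i))ᴴ) :
    ∃ (X Y : Matrix (∀ i, Fin (n i)) (∀ i, Fin (n i)) ℂ)
      (b : (∀ i, Fin (n i)) → ℝ),
      X ∈ Matrix.unitaryGroup (∀ i, Fin (n i)) ℂ ∧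
      Y ∈ Matrix.unitaryGroup (∀ i, Fin (n i)) ℂ ∧
      (∀ x, 0 < b x) ∧
      ρ₁ = X * Matrix.diagonal (fun x => (b x : ℂ)) * Yᴴ * ρ₂ *
        Y * Matrix.diagonal (fun x => (b x : ℂ)) * Xᴴ ∧
      ∀ i₀ : Fin K,
        (realignAt (X * Matrix.diagonal (fun x => (b x : ℂ)) * Yᴴ) i₀).rank = 1 :=
  slocc_mixed_necessary_general K n hn ρ₁ ρ₂ hslocc
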